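/- Let Δ be a finite simplicial complex having at least one nonempty face, whose facets are listed in a shelling order F_1, …, F_r, with restriction map R. Then there exists an acyclic matching M on the set of nonempty faces of Δ such that the faces not occurring in any pair of M are exactly the spanning facets (the facets F_i with R(F_i) = F_i) together with exactly one additional singleton face {v} for some vertex v ∈ F_1. -/

import Mathlib

/-- A matching on a family `P` of finite sets: a set of pairs `(σ, τ)` with `σ ⊆ τ` and
`|τ| = |σ| + 1`, such that every member of `P` occurs in at most one pair. -/
def IsMatching {V : Type*} (P : Set (Finset V)) (M : Set (Finset V × Finset V)) : Prop :=
  (∀ p ∈ M, p.1 ∈ P ∧ p.2 ∈ P ∧ p.1 ⊆ p.2 ∧ p.2.card = p.1.card + 1) ∧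
  (∀ p ∈ M, ∀ q ∈ M, ∀ σ : Finset V,
      (σ = p.1 ∨ σ = p.2) → (σ = q.1 ∨ σ = q.2) → p = q)

/-- An acyclic matching: a matching with no cycle `(σ₁, τ₁), …, (σ_m, τ_m)` (`m ≥ 2`,
the `τ_i` pairwise distinct) with `σ_i ⊆ τ_{i+1}` and `|τ_{i+1}| = |σ_i| + 1`, indices
taken modulo `m`. -/
def IsAcyclicMatching {V : Type*} (P : Set (Finset V))
    (M : Set (Finset V × Finset V)) : Prop :=
  IsMatching P M ∧
  ¬ ∃ (m : ℕ) (_ : 2 ≤ m) (σ τ : ZMod m → Finset V),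
      Function.Injective τ ∧
      (∀ i : ZMod m, (σ i, τ i) ∈ M) ∧
      (∀ i : ZMod m, σ i ⊆ τ (i + 1) ∧ (τ (i + 1)).card = (σ i).card + 1)

/-!
Write `J σ` for the index of the first facet containing the face `σ`. The shelling property
implies that the restriction `R(F_j)` lies in no earlier facet, so the faces with `J σ = j` are
exactly the interval `[R(F_j), F_j]`. For a non-spanning `F_j` fix a vertex `x_j ∈ F_j \ R(F_j)`;
toggling `x_j` preserves the interval, so pairing `σ` with `σ ∪ {x_j}` is a matching which
leaves unmatched only the spanning facets (their interval is a single face) and `{x_1}`, whose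
partner would be the empty face. Along a cycle `J` can only grow, hence it is constant, and
then the cycle collapses because all its upper faces are `σ ∪ {x_j}`.
-/

theorem ZMod.le_of_forall_le_add_one {m : ℕ} [NeZero m] {α : Type*} [Preorder α]
    {f : ZMod m → α} (hf : ∀ i, f i ≤ f (i + 1)) (i j : ZMod m) : f i ≤ f j := by
  have key : ∀ n : ℕ, f i ≤ f (i + n) := by
    intro n
    induction n with
    | zero => simp
    | succ n ih => exact ih.trans (by simpa [add_assoc] using hf (i + n))
  simpa using key (j - i).val

section Shelling

variable {V : Type*} [DecidableEq V] {r : ℕ}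

def restriction (F : Fin r → Finset V) (i : Fin r) : Finset V :=
  (F i).filter fun y => ∃ l < i, (F i).erase y ⊆ F l

def IsShellingOrder (F : Fin r → Finset V) : Prop :=
  ∀ i j : Fin r, i < j → ∃ l : Fin r, l < j ∧
    F i ∩ F j ⊆ F l ∩ F j ∧ (F l ∩ F j).card = (F j).card - 1

variable {F : Fin r → Finset V}

theorem IsShellingOrder.not_restriction_subset (hF : IsShellingOrder F) {l j : Fin r}
    (hj : (F j).Nonempty) (hlj : l < j) : ¬ restriction F j ⊆ F l := by
  obtain ⟨l', hl'j, hsub, hcard⟩ := hF l j hlj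
  obtain ⟨y, hy, hins⟩ : ∃ y ∉ F l' ∩ F j, insert y (F l' ∩ F j) = F j :=
    Finset.exists_eq_insert_iff.2
      ⟨Finset.inter_subset_right, by have := hj.card_pos; omega⟩
  have hyF : y ∈ F j := hins ▸ Finset.mem_insert_self _ _
  have hyR : y ∈ restriction F j := by
    refine Finset.mem_filter.2 ⟨hyF, l', hl'j, ?_⟩
    rw [← hins, Finset.erase_insert hy]
    exact Finset.inter_subset_left
  exact fun hR => hy (hsub (Finset.mem_inter.2 ⟨hR hyR, hyF⟩))

theorem exists_free_vertex_choice (hF : ∀ i, (F i).Nonempty) :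
    ∃ x : Fin r → V, (∀ j, x j ∈ F j) ∧
      ∀ j, x j ∈ restriction F j → restriction F j = F j := by
  have hfree : ∀ j, ∃ y ∈ F j, y ∈ restriction F j → restriction F j = F j := by
    intro j
    by_cases hR : restriction F j = F j
    · obtain ⟨y, hy⟩ := hF j
      exact ⟨y, hy, fun _ => hR⟩
    · obtain ⟨y, hy, hyR⟩ :=
        Finset.exists_of_ssubset ((Finset.filter_subset _ _).ssubset_of_ne hR)
      exact ⟨y, hy, fun h => (hyR h).elim⟩
  choose x hxF hxR using hfree
  exact ⟨x, hxF, hxR⟩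

variable [NeZero r]

/-- Junk value `0` when no facet contains `σ`. -/
noncomputable def firstFacet (F : Fin r → Finset V) (σ : Finset V) : Fin r :=
  if h : (Finset.univ.filter fun i => σ ⊆ F i).Nonempty
  then (Finset.univ.filter fun i => σ ⊆ F i).min' h else 0

theorem firstFacet_le {σ : Finset V} {l : Fin r} (h : σ ⊆ F l) : firstFacet F σ ≤ l := by
  have hne : (Finset.univ.filter fun i => σ ⊆ F i).Nonempty := ⟨l, by simp [h]⟩
  rw [firstFacet, dif_pos hne]
  exact Finset.min'_le _ _ (by simp [h])

theorem firstFacet_eq_zero {σ : Finset V} (h : σ ⊆ F 0) : firstFacet F σ = 0 :=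
  nonpos_iff_eq_zero.1 (firstFacet_le h)

theorem subset_firstFacet {σ : Finset V} (h : ∃ i, σ ⊆ F i) : σ ⊆ F (firstFacet F σ) := by
  obtain ⟨l, hl⟩ := h
  have hne : (Finset.univ.filter fun i => σ ⊆ F i).Nonempty := ⟨l, by simp [hl]⟩
  rw [firstFacet, dif_pos hne]
  simpa using Finset.min'_mem _ hne

theorem restriction_firstFacet_subset {σ : Finset V} (h : ∃ i, σ ⊆ F i) :
    restriction F (firstFacet F σ) ⊆ σ := by
  intro y hy
  obtain ⟨-, l, hl, hsub⟩ := Finset.mem_filter.1 hy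
  by_contra hyσ
  exact (firstFacet_le ((Finset.subset_erase.2 ⟨subset_firstFacet h, hyσ⟩).trans hsub)).not_gt hl

theorem IsShellingOrder.firstFacet_eq (hF : IsShellingOrder F) {σ : Finset V} {j : Fin r}
    (hj : (F j).Nonempty) (hR : restriction F j ⊆ σ) (hσ : σ ⊆ F j) : firstFacet F σ = j :=
  (firstFacet_le hσ).antisymm <| not_lt.1 fun hlt =>
    hF.not_restriction_subset hj hlt (hR.trans (subset_firstFacet ⟨j, hσ⟩))

theorem IsShellingOrder.firstFacet_facet (hF : IsShellingOrder F) {i : Fin r}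
    (hi : (F i).Nonempty) : firstFacet F (F i) = i :=
  hF.firstFacet_eq hi (Finset.filter_subset _ _) subset_rfl

theorem IsShellingOrder.firstFacet_insert (hF : IsShellingOrder F) {σ : Finset V} {y : V}
    (hσ : ∃ i, σ ⊆ F i) (hy : y ∈ F (firstFacet F σ)) :
    firstFacet F (insert y σ) = firstFacet F σ :=
  hF.firstFacet_eq ⟨y, hy⟩ ((restriction_firstFacet_subset hσ).trans (Finset.subset_insert _ _))
    (Finset.insert_subset hy (subset_firstFacet hσ))

theorem IsShellingOrder.firstFacet_erase (hF : IsShellingOrder F) {σ : Finset V} {y : V}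
    (hσ : ∃ i, σ ⊆ F i) (hy : y ∈ F (firstFacet F σ))
    (hyR : y ∉ restriction F (firstFacet F σ)) : firstFacet F (σ.erase y) = firstFacet F σ :=
  hF.firstFacet_eq ⟨y, hy⟩ (Finset.subset_erase.2 ⟨restriction_firstFacet_subset hσ, hyR⟩)
    ((Finset.erase_subset _ _).trans (subset_firstFacet hσ))

structure IsShellingPair (F : Fin r → Finset V) (x : Fin r → V) (σ τ : Finset V) : Prop where
  face : ∃ i, σ ⊆ F i
  ne_empty : σ ≠ ∅
  mem_facet : x (firstFacet F σ) ∈ F (firstFacet F σ)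
  notMem_restriction : x (firstFacet F σ) ∉ restriction F (firstFacet F σ)
  notMem : x (firstFacet F σ) ∉ σ
  eq_insert : τ = insert (x (firstFacet F σ)) σ

def shellingMatching (F : Fin r → Finset V) (x : Fin r → V) : Set (Finset V × Finset V) :=
  {p | IsShellingPair F x p.1 p.2}

variable {x : Fin r → V} {σ τ : Finset V}

theorem IsShellingPair.snd_subset (h : IsShellingPair F x σ τ) : τ ⊆ F (firstFacet F σ) :=
  h.eq_insert ▸ Finset.insert_subset h.mem_facet (subset_firstFacet h.face)

theorem IsShellingPair.firstFacet_snd (h : IsShellingPair F x σ τ) (hF : IsShellingOrder F) :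
    firstFacet F τ = firstFacet F σ :=
  h.eq_insert ▸ hF.firstFacet_insert h.face h.mem_facet

theorem IsShellingPair.fst_eq_erase (h : IsShellingPair F x σ τ) (hF : IsShellingOrder F) :
    x (firstFacet F τ) ∈ τ ∧ σ = τ.erase (x (firstFacet F τ)) := by
  rw [h.firstFacet_snd hF, h.eq_insert]
  exact ⟨Finset.mem_insert_self _ _, (Finset.erase_insert h.notMem).symm⟩

theorem IsShellingOrder.isMatching_shellingMatching (hF : IsShellingOrder F) :
    IsMatching {σ | (∃ i, σ ⊆ F i) ∧ σ ≠ ∅} (shellingMatching F x) := by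
  refine ⟨fun p hp => ⟨⟨hp.face, hp.ne_empty⟩, ⟨⟨_, hp.snd_subset⟩, ?_⟩, ?_, ?_⟩, ?_⟩
  · rw [hp.eq_insert]
    exact Finset.insert_ne_empty _ _
  · rw [hp.eq_insert]
    exact Finset.subset_insert _ _
  · rw [hp.eq_insert]
    exact Finset.card_insert_of_notMem hp.notMem
  intro p hp q hq σ hσp hσq
  have hfst : p.1 = q.1 → p = q := fun h => Prod.ext h (by rw [hp.eq_insert, hq.eq_insert, h])
  have hsnd : p.2 = q.2 → p = q := fun h =>
    Prod.ext (by rw [(hp.fst_eq_erase hF).2, (hq.fst_eq_erase hF).2, h]) h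
  -- a lower face misses its free vertex, an upper face contains it
  have hmix : ∀ {p q : Finset V × Finset V}, p ∈ shellingMatching F x →
      q ∈ shellingMatching F x → p.1 ≠ q.2 :=
    fun hp hq h => hp.notMem (h ▸ (hq.fst_eq_erase hF).1)
  rcases hσp with rfl | rfl <;> rcases hσq with h | h
  · exact hfst h
  · exact (hmix hp hq h).elim
  · exact (hmix hq hp h.symm).elim
  · exact hsnd h

theorem not_exists_cycle_shellingMatching :
    ¬ ∃ (m : ℕ) (_ : 2 ≤ m) (σ τ : ZMod m → Finset V),
      Function.Injective τ ∧
      (∀ i : ZMod m, (σ i, τ i) ∈ shellingMatching F x) ∧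
      (∀ i : ZMod m, σ i ⊆ τ (i + 1) ∧ (τ (i + 1)).card = (σ i).card + 1) := by
  rintro ⟨m, hm, σ, τ, hτ, hM, hstep⟩
  have hM : ∀ i, IsShellingPair F x (σ i) (τ i) := hM
  have : NeZero m := ⟨by omega⟩
  have : Fact (1 < m) := ⟨by omega⟩
  have hle : ∀ i, firstFacet F (σ i) ≤ firstFacet F (σ (i + 1)) := fun i =>
    firstFacet_le ((hstep i).1.trans (hM (i + 1)).snd_subset)
  have hJ : firstFacet F (σ 1) = firstFacet F (σ 0) :=
    le_antisymm (ZMod.le_of_forall_le_add_one hle 1 0) (by simpa using hle 0)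
  have hsub : τ 0 ⊆ τ 1 := by
    rw [(hM 0).eq_insert]
    refine Finset.insert_subset ?_ (by simpa using (hstep 0).1)
    rw [← hJ, (hM 1).eq_insert]
    exact Finset.mem_insert_self _ _
  have hcard : (τ 1).card ≤ (τ 0).card := by
    rw [(hM 0).eq_insert, Finset.card_insert_of_notMem (hM 0).notMem]
    simpa using (hstep 0).2.le
  exact one_ne_zero (hτ (Finset.eq_of_subset_of_card_le hsub hcard).symm)

theorem IsShellingOrder.isAcyclicMatching_shellingMatching (hF : IsShellingOrder F) :
    IsAcyclicMatching {σ | (∃ i, σ ⊆ F i) ∧ σ ≠ ∅} (shellingMatching F x) :=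
  ⟨hF.isMatching_shellingMatching, not_exists_cycle_shellingMatching⟩

theorem IsShellingOrder.notMem_restriction_of_mem_shellingMatching (hF : IsShellingOrder F)
    {p : Finset V × Finset V} (hp : p ∈ shellingMatching F x) (hσ : σ = p.1 ∨ σ = p.2) :
    x (firstFacet F σ) ∉ restriction F (firstFacet F σ) := by
  rcases hσ with rfl | rfl
  · exact hp.notMem_restriction
  · rw [hp.firstFacet_snd hF]
    exact hp.notMem_restriction

theorem IsShellingOrder.ne_singleton_of_mem_shellingMatching (hF : IsShellingOrder F)
    (hx0 : x 0 ∈ F 0) {p : Finset V × Finset V} (hp : p ∈ shellingMatching F x)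
    (hσ : σ = p.1 ∨ σ = p.2) : σ ≠ {x 0} := by
  rintro rfl
  have hJ : firstFacet F {x 0} = 0 := firstFacet_eq_zero (Finset.singleton_subset_iff.2 hx0)
  rcases hσ with h | h
  · exact hp.notMem (by rw [← h, hJ]; exact Finset.mem_singleton_self _)
  · exact hp.ne_empty (by rw [(hp.fst_eq_erase hF).2, ← h, hJ, Finset.erase_singleton])

theorem IsShellingOrder.exists_mem_shellingMatching (hF : IsShellingOrder F)
    (hxF : ∀ j, x j ∈ F j) (hσ : ∃ i, σ ⊆ F i) (hσne : σ ≠ ∅)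
    (hR : x (firstFacet F σ) ∉ restriction F (firstFacet F σ)) (hσx : σ ≠ {x 0}) :
    ∃ p ∈ shellingMatching F x, σ = p.1 ∨ σ = p.2 := by
  by_cases hxσ : x (firstFacet F σ) ∈ σ
  · have hJ := hF.firstFacet_erase hσ (hxF _) hR
    have hne : σ.erase (x (firstFacet F σ)) ≠ ∅ := by
      intro he
      have h0 : firstFacet F σ = 0 := by
        rw [← hJ, he, firstFacet_eq_zero (Finset.empty_subset _)]
      rw [← h0] at hσx
      exact hσx (((Finset.erase_eq_empty_iff _ _).1 he).resolve_left hσne)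
    refine ⟨(σ.erase (x (firstFacet F σ)), σ),
      ⟨⟨_, (Finset.erase_subset _ _).trans (subset_firstFacet hσ)⟩, hne, ?_, ?_, ?_, ?_⟩,
      Or.inr rfl⟩ <;> dsimp only <;> rw [hJ]
    · exact hxF _
    · exact hR
    · exact Finset.notMem_erase _ _
    · exact (Finset.insert_erase hxσ).symm
  · exact ⟨(σ, insert (x (firstFacet F σ)) σ), ⟨hσ, hσne, hxF _, hR, hxσ, rfl⟩, Or.inl rfl⟩

theorem IsShellingOrder.mem_restriction_firstFacet_iff (hF : IsShellingOrder F)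
    (hxF : ∀ j, x j ∈ F j) (hxR : ∀ j, x j ∈ restriction F j → restriction F j = F j)
    (hσ : ∃ i, σ ⊆ F i) :
    x (firstFacet F σ) ∈ restriction F (firstFacet F σ) ↔
      ∃ i, F i = σ ∧ restriction F i = F i := by
  constructor
  · intro hx
    have hRF := hxR _ hx
    refine ⟨_, ((subset_firstFacet hσ).antisymm ?_).symm, hRF⟩
    exact hRF ▸ restriction_firstFacet_subset hσ
  · rintro ⟨i, rfl, hRF⟩
    rw [hF.firstFacet_facet ⟨x i, hxF i⟩, hRF]
    exact hxF i

theorem IsShellingOrder.forall_ne_shellingMatching_iff (hF : IsShellingOrder F)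
    (hxF : ∀ j, x j ∈ F j) (hxR : ∀ j, x j ∈ restriction F j → restriction F j = F j)
    (hσ : ∃ i, σ ⊆ F i) (hσne : σ ≠ ∅) :
    (∀ p ∈ shellingMatching F x, σ ≠ p.1 ∧ σ ≠ p.2) ↔
      (∃ i, F i = σ ∧ restriction F i = F i) ∨ σ = {x 0} := by
  rw [← hF.mem_restriction_firstFacet_iff hxF hxR hσ]
  constructor
  · intro hun
    by_contra! h
    obtain ⟨p, hp, hσp⟩ := hF.exists_mem_shellingMatching hxF hσ hσne h.1 h.2
    exact not_or.2 (hun p hp) hσp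
  · refine fun h p hp => not_or.1 fun hσp => ?_
    rcases h with h | h
    · exact hF.notMem_restriction_of_mem_shellingMatching hp hσp h
    · exact hF.ne_singleton_of_mem_shellingMatching (hxF 0) hp hσp h

end Shelling

theorem exists_facet_superset {V : Type*} {r : ℕ} {F : Fin r → Finset V}
    {Δ : Finset (Finset V)} (hsurj : ∀ σ ∈ Δ, (∀ τ ∈ Δ, σ ⊆ τ → σ = τ) → ∃ i, F i = σ)
    {σ : Finset V} (hσ : σ ∈ Δ) : ∃ i, σ ⊆ F i := by
  obtain ⟨τ, hστ, hτ⟩ := Δ.exists_le_maximal hσ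
  obtain ⟨i, rfl⟩ := hsurj τ hτ.prop fun ρ hρ h => h.antisymm (hτ.le_of_ge hρ h)
  exact ⟨i, hστ⟩

/-- A shelling order on the facets of a finite simplicial complex induces an acyclic
matching on the nonempty faces whose unmatched faces are exactly the spanning facets
together with one singleton face `{v}` with `v ∈ F₁`. -/
theorem shelling_gives_optimal_acyclic_matching
    {V : Type*} [DecidableEq V]
    (Δ : Finset (Finset V))
    (hdc : ∀ σ ∈ Δ, ∀ τ : Finset V, τ ⊆ σ → τ ∈ Δ)
    (hne : ∃ σ ∈ Δ, σ ≠ ∅)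
    (r : ℕ) (hr : 0 < r) (F : Fin r → Finset V)
    -- `F` lists exactly the facets of `Δ`
    (hF : ∀ i, F i ∈ Δ ∧ ∀ σ ∈ Δ, F i ⊆ σ → F i = σ)
    (hsurj : ∀ σ ∈ Δ, (∀ τ ∈ Δ, σ ⊆ τ → σ = τ) → ∃ i, F i = σ)
    -- the list is a shelling order
    (hshell : ∀ i j : Fin r, i < j → ∃ l : Fin r, l < j ∧
        F i ∩ F j ⊆ F l ∩ F j ∧ (F l ∩ F j).card = (F j).card - 1) :
    ∃ M : Set (Finset V × Finset V),
      IsAcyclicMatching {σ : Finset V | σ ∈ Δ ∧ σ ≠ ∅} M ∧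
      ∃ v ∈ F ⟨0, hr⟩,
        ∀ σ ∈ Δ, σ ≠ ∅ →
          ((∀ p ∈ M, σ ≠ p.1 ∧ σ ≠ p.2) ↔
            ((∃ i : Fin r, F i = σ ∧
                ∀ x ∈ F i, ∃ j : Fin r, j < i ∧ (F i).erase x ⊆ F j) ∨
              σ = {v})) := by
  have : NeZero r := ⟨hr.ne'⟩
  have hshell : IsShellingOrder F := hshell
  have hfaces : ∀ σ, σ ∈ Δ ↔ ∃ i, σ ⊆ F i := fun σ =>
    ⟨exists_facet_superset hsurj, fun ⟨i, hi⟩ => hdc _ (hF i).1 σ hi⟩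
  obtain ⟨σ₀, hσ₀, hσ₀ne⟩ := hne
  have hFne : ∀ i, (F i).Nonempty := fun i => Finset.nonempty_iff_ne_empty.2 fun h =>
    hσ₀ne (((hF i).2 σ₀ hσ₀ (h ▸ Finset.empty_subset _)).symm.trans h)
  obtain ⟨x, hxF, hxR⟩ := exists_free_vertex_choice hFne
  have hP : {σ | σ ∈ Δ ∧ σ ≠ ∅} = {σ | (∃ i, σ ⊆ F i) ∧ σ ≠ ∅} := by simp only [hfaces]
  refine ⟨shellingMatching F x, hP ▸ hshell.isAcyclicMatching_shellingMatching, x 0,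
    Fin.mk_zero' r ▸ hxF 0, fun σ hσ hσne => ?_⟩
  rw [hshell.forall_ne_shellingMatching_iff hxF hxR ((hfaces σ).1 hσ) hσne]
  simp only [restriction, Finset.filter_eq_self]
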